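/- Define G_{N,t}(x) := (t / log N) · ∫_0^t exp(-((t-s)t/s) · x²/N²) ds/s for N, t > 0 and x ≠ 0. Then for every t > 0 and x ≠ 0, sup_{N ≥ e} G_{N,t}(x) ≤ 7 t · log(e + 1/t) · log(e + 1/|x|). -/
import Mathlib


open Real MeasureTheory Set Filter

noncomputable def G (N t x : ℝ) : ℝ :=
  (t / Real.log N) * ∫ s in (0:ℝ)..t, Real.exp (-(((t - s) * t / s) * (x ^ 2 / N ^ 2))) / s

set_option maxHeartbeats 800000 in
theorem stmt_7 (t x : ℝ) (ht : 0 < t) (hx : x ≠ 0) (N : ℝ) (hN : Real.exp 1 ≤ N) :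
    G N t x ≤ 7 * t * Real.log (Real.exp 1 + 1 / t) * Real.log (Real.exp 1 + 1 / |x|) := by
  have hN0 : (0:ℝ) < N := lt_of_lt_of_le (Real.exp_pos 1) hN
  have hlogN : 1 ≤ Real.log N := by
    have h := Real.log_le_log (Real.exp_pos 1) hN
    rwa [Real.log_exp] at h
  have hlogN0 : 0 < Real.log N := lt_of_lt_of_le one_pos hlogN
  set Lt : ℝ := Real.log (Real.exp 1 + 1 / t) with hLt
  set Lx : ℝ := Real.log (Real.exp 1 + 1 / |x|) with hLx
  have hxpos : 0 < |x| := abs_pos.mpr hx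
  have hLt1 : 1 ≤ Lt := by
    rw [hLt]
    calc (1:ℝ) = Real.log (Real.exp 1) := (Real.log_exp 1).symm
    _ ≤ _ := Real.log_le_log (Real.exp_pos 1) (le_add_of_nonneg_right (by positivity))
  have hLx1 : 1 ≤ Lx := by
    rw [hLx]
    calc (1:ℝ) = Real.log (Real.exp 1) := (Real.log_exp 1).symm
    _ ≤ _ := Real.log_le_log (Real.exp_pos 1) (le_add_of_nonneg_right (by positivity))
  have hLtt : -Real.log t ≤ Lt := by
    rw [hLt, ← Real.log_inv]
    exact Real.log_le_log (by positivity) (by rw [one_div]; linarith [Real.exp_pos 1])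
  have hLxx : -Real.log x ≤ Lx := by
    rw [hLx, ← Real.log_abs, ← Real.log_inv]
    exact Real.log_le_log (by positivity) (by rw [one_div]; linarith [Real.exp_pos 1])
  set a : ℝ := x ^ 2 / N ^ 2 with ha
  have ha0 : 0 < a := by positivity
  set y : ℝ := t * a with hy
  have hy0 : 0 < y := mul_pos ht ha0
  set f : ℝ → ℝ := fun s => Real.exp (-(((t - s) * t / s) * a)) / s with hf
  have hf0 : f 0 = 0 := by simp [hf]
  have hGeq : G N t x = (t / Real.log N) * ∫ s in (0:ℝ)..t, f s := by
    rw [G, hf, ha]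
  clear_value Lt Lx a y f
  -- pointwise bound
  have hfb : ∀ s ∈ Set.Ioc (0:ℝ) t, f s ≤ 1 / (s * (1 - y) + t * y) := by
    intro s hs
    obtain ⟨hs0, hst⟩ := hs
    set w : ℝ := ((t - s) * t / s) * a with hw
    have hw0 : 0 ≤ w := by
      apply mul_nonneg _ ha0.le
      apply div_nonneg (mul_nonneg (by linarith) ht.le) hs0.le
    have hexp : Real.exp (-w) ≤ 1 / (1 + w) := by
      rw [Real.exp_neg, inv_eq_one_div]
      apply div_le_div_of_nonneg_left one_pos.le (by linarith) ?_
      linarith [Real.add_one_le_exp w]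
    have hden : s * (1 - y) + t * y = (1 + w) * s := by
      rw [hw, hy]
      field_simp
      ring
    rw [hden]
    calc f s = Real.exp (-w) / s := by rw [hf, hw]
    _ ≤ (1 / (1 + w)) / s := by gcongr
    _ = 1 / ((1 + w) * s) := div_div 1 (1 + w) s
  have hfnn : ∀ s ∈ Set.Ioc (0:ℝ) t, 0 ≤ f s := by
    intro s hs
    have : 0 < s := hs.1
    rw [hf]; positivity
  have hDmin : ∀ s ∈ Set.Icc (0:ℝ) t, t * min y 1 ≤ s * (1 - y) + t * y := by
    intro s hs
    rcases le_total y 1 with h | h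
    · rw [min_eq_left h]
      nlinarith [hs.1, hs.2]
    · rw [min_eq_right h]
      nlinarith [hs.1, hs.2]
  have hminpos : 0 < t * min y 1 := mul_pos ht (lt_min hy0 one_pos)
  -- integrability
  have hmeas : Measurable f := by
    rw [hf]
    apply Measurable.div _ measurable_id
    apply Real.measurable_exp.comp
    apply Measurable.neg
    exact (((measurable_const.sub measurable_id).mul measurable_const).div measurable_id).mul
      measurable_const
  have hint : IntervalIntegrable f volume 0 t := by
    rw [intervalIntegrable_iff_integrableOn_Ioc_of_le ht.le]
    apply Measure.integrableOn_of_bounded (M := 1 / (t * min y 1))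
    · exact (measure_Ioc_lt_top).ne
    · exact hmeas.aestronglyMeasurable
    · filter_upwards [ae_restrict_mem measurableSet_Ioc] with s hs
      rw [Real.norm_eq_abs, abs_of_nonneg (hfnn s hs)]
      calc f s ≤ 1 / (s * (1 - y) + t * y) := hfb s hs
      _ ≤ 1 / (t * min y 1) :=
          one_div_le_one_div_of_le hminpos (hDmin s ⟨hs.1.le, hs.2⟩)
  -- main case split
  rcases le_or_gt 1 y with hycase | hycase
  · -- y ≥ 1 : integral ≤ 1
    have hI : (∫ s in (0:ℝ)..t, f s) ≤ 1 := by
      have hmono : (∫ s in (0:ℝ)..t, f s) ≤ ∫ s in (0:ℝ)..t, 1 / t := by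
        apply intervalIntegral.integral_mono_on ht.le hint intervalIntegrable_const
        intro s hs
        rcases eq_or_lt_of_le hs.1 with h | h
        · rw [← h, hf0]; positivity
        · calc f s ≤ 1 / (s * (1 - y) + t * y) := hfb s ⟨h, hs.2⟩
          _ ≤ 1 / t := by
              apply one_div_le_one_div_of_le ht
              have h2 := hDmin s hs
              rwa [min_eq_right hycase, mul_one] at h2
      calc (∫ s in (0:ℝ)..t, f s) ≤ ∫ s in (0:ℝ)..t, 1 / t := hmono
      _ = 1 := by
          rw [intervalIntegral.integral_const, smul_eq_mul, sub_zero]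
          field_simp
    rw [hGeq]
    have h1 : (t / Real.log N) * (∫ s in (0:ℝ)..t, f s) ≤ (t / Real.log N) * 1 :=
      mul_le_mul_of_nonneg_left hI (by positivity)
    rw [mul_one] at h1
    have h2 : t / Real.log N ≤ t := by
      rw [div_le_iff₀ hlogN0]
      nlinarith
    have h3 : (1:ℝ) ≤ Lt * Lx := by nlinarith
    have h4 : t ≤ 7 * t * Lt * Lx := by nlinarith
    linarith
  · -- y < 1 : split at b = t * y
    set b : ℝ := t * y with hb
    clear_value b
    have hb0 : 0 < b := by rw [hb]; exact mul_pos ht hy0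
    have hbt : b < t := by rw [hb]; nlinarith
    have hint1 : IntervalIntegrable f volume 0 b := by
      apply hint.mono_set
      rw [Set.uIcc_of_le hb0.le, Set.uIcc_of_le ht.le]
      exact Set.Icc_subset_Icc_right hbt.le
    have hint2 : IntervalIntegrable f volume b t := by
      apply hint.mono_set
      rw [Set.uIcc_of_le hbt.le, Set.uIcc_of_le ht.le]
      exact Set.Icc_subset_Icc_left hb0.le
    have hsplit : (∫ s in (0:ℝ)..t, f s) = (∫ s in (0:ℝ)..b, f s) + ∫ s in b..t, f s :=
      (intervalIntegral.integral_add_adjacent_intervals hint1 hint2).symm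
    have hI1 : (∫ s in (0:ℝ)..b, f s) ≤ 1 := by
      have hmono : (∫ s in (0:ℝ)..b, f s) ≤ ∫ s in (0:ℝ)..b, 1 / b := by
        apply intervalIntegral.integral_mono_on hb0.le hint1 intervalIntegrable_const
        intro s hs
        rcases eq_or_lt_of_le hs.1 with h | h
        · rw [← h, hf0]; positivity
        · calc f s ≤ 1 / (s * (1 - y) + b) := hfb s ⟨h, hs.2.trans hbt.le⟩
          _ ≤ 1 / b := by
              apply one_div_le_one_div_of_le hb0
              nlinarith [hs.1]
      calc _ ≤ ∫ s in (0:ℝ)..b, 1 / b := hmono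
      _ = 1 := by
          rw [intervalIntegral.integral_const, smul_eq_mul, sub_zero]
          field_simp
    have hI2 : (∫ s in b..t, f s) ≤ Real.log t - Real.log b := by
      have hmono : (∫ s in b..t, f s) ≤ ∫ s in b..t, 1 / s := by
        apply intervalIntegral.integral_mono_on hbt.le hint2 ?_ ?_
        · apply ContinuousOn.intervalIntegrable
          apply ContinuousOn.div continuousOn_const continuousOn_id
          intro s hs
          rw [Set.uIcc_of_le hbt.le] at hs
          exact ne_of_gt (lt_of_lt_of_le hb0 hs.1)
        · intro s hs
          have hs0 : 0 < s := lt_of_lt_of_le hb0 hs.1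
          have hw0 : (0:ℝ) ≤ ((t - s) * t / s) * a := by
            apply mul_nonneg _ ha0.le
            apply div_nonneg (mul_nonneg (by linarith [hs.2]) ht.le) hs0.le
          have hexp1 : Real.exp (-(((t - s) * t / s) * a)) ≤ 1 :=
            Real.exp_le_one_iff.mpr (by linarith)
          calc f s = Real.exp (-(((t - s) * t / s) * a)) / s := by rw [hf]
          _ ≤ 1 / s := by gcongr
      have hcomp : (∫ s in b..t, 1 / s) = Real.log t - Real.log b := by
        rw [integral_one_div (by
          rw [Set.uIcc_of_le hbt.le]
          intro hmem
          exact absurd hmem.1 (not_le.mpr hb0))]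
        rw [Real.log_div ht.ne' hb0.ne']
      linarith [hmono, hcomp.le, hcomp.ge]
    have hA : (∫ s in (0:ℝ)..t, f s) ≤ 1 + (Real.log t - Real.log b) := by
      rw [hsplit]; linarith
    have hlogb : Real.log b = 2 * Real.log t + 2 * Real.log x - 2 * Real.log N := by
      rw [hb, hy, ha]
      rw [Real.log_mul ht.ne' (by positivity), Real.log_mul ht.ne' (by positivity),
        Real.log_div (by positivity) (by positivity), Real.log_pow, Real.log_pow]
      push_cast
      ring
    have hAB : 1 + (Real.log t - Real.log b) ≤ (3 + Lt + 2 * Lx) * Real.log N := by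
      rw [hlogb]
      have p1 : Lt * 1 ≤ Lt * Real.log N :=
        mul_le_mul_of_nonneg_left hlogN (by linarith)
      have p2 : Lx * 1 ≤ Lx * Real.log N :=
        mul_le_mul_of_nonneg_left hlogN (by linarith)
      nlinarith
    rw [hGeq]
    have h5 : (t / Real.log N) * (∫ s in (0:ℝ)..t, f s) ≤
        (t / Real.log N) * (1 + (Real.log t - Real.log b)) :=
      mul_le_mul_of_nonneg_left hA (by positivity)
    have h6 : (t / Real.log N) * (1 + (Real.log t - Real.log b)) ≤ t * (3 + Lt + 2 * Lx) := by
      rw [div_mul_eq_mul_div, div_le_iff₀ hlogN0]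
      calc t * (1 + (Real.log t - Real.log b))
          ≤ t * ((3 + Lt + 2 * Lx) * Real.log N) := mul_le_mul_of_nonneg_left hAB ht.le
      _ = t * (3 + Lt + 2 * Lx) * Real.log N := by ring
    have h7 : t * (3 + Lt + 2 * Lx) ≤ 7 * t * Lt * Lx := by
      nlinarith [mul_nonneg ht.le (mul_nonneg (sub_nonneg.mpr hLt1) (sub_nonneg.mpr hLx1)),
        mul_nonneg ht.le (sub_nonneg.mpr hLt1), mul_nonneg ht.le (sub_nonneg.mpr hLx1)]
    linarith
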